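/- arXiv:2105.02361 — 3 statements merged into one kernel-verified Lean document; each statement's English description precedes it below -/
import Mathlib

section
/- For every integer d ≥ 1, letting f_2 denote the edge v_{d−1} v_d of L_d, one has c_o(L_d, f_2) = d and c_e(L_d, f_2) = 0. -/
/-!
A cycle through `v_(d-1) v_d` also uses `v_d v_(d+1)`, since `v_d` has degree 2. Grow the
path `v_k … v_(2d-k)` contained in the cycle outwards: at `v_k` the cycle either closes up
through the chord `v_k v_(2d-k)`, or continues to `v_(k-1)`; in the latter case the chord is
absent, so `v_(2d-k)` continues to `v_(2d-k+1)`. At `v_0`, which has degree 2, the chord is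
forced. A cycle containing another cycle equals it, so the cycles through `v_(d-1) v_d` are
exactly the cycles `C_k = v_k v_(k+1) … v_(2d-k) v_k` for `k < d`, and `C_k` has the odd
number `2(d-k)+1` of vertices.
-/

open SimpleGraph Filter

/-- A subgraph is a cycle: nonempty vertex set, connected, and every vertex of the
subgraph has degree exactly 2 in the subgraph. -/
def SimpleGraph.Subgraph.IsCycleSub {V : Type*} {G : SimpleGraph V} (H : G.Subgraph) : Prop :=
  H.verts.Nonempty ∧ H.coe.Connected ∧ ∀ v ∈ H.verts, (H.neighborSet v).ncard = 2

/-- The number of odd cycles of `G`. -/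
noncomputable def cOdd {V : Type*} (G : SimpleGraph V) : ℕ :=
  {H : G.Subgraph | H.IsCycleSub ∧ Odd H.verts.ncard}.ncard

/-- The number of even cycles of `G`. -/
noncomputable def cEven {V : Type*} (G : SimpleGraph V) : ℕ :=
  {H : G.Subgraph | H.IsCycleSub ∧ Even H.verts.ncard}.ncard

/-- The number of odd cycles of `G` passing through the edge `xy`. -/
noncomputable def cOddE {V : Type*} (G : SimpleGraph V) (x y : V) : ℕ :=
  {H : G.Subgraph | H.IsCycleSub ∧ Odd H.verts.ncard ∧ H.Adj x y}.ncard

/-- The number of even cycles of `G` passing through the edge `xy`. -/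
noncomputable def cEvenE {V : Type*} (G : SimpleGraph V) (x y : V) : ℕ :=
  {H : G.Subgraph | H.IsCycleSub ∧ Even H.verts.ncard ∧ H.Adj x y}.ncard

/-- The graph `L_d`: a path `v_0 v_1 … v_(2d)` together with the chords `v_i v_(2d-i)`
for `0 ≤ i ≤ d-1`. -/
def LGraph (d : ℕ) : SimpleGraph (Fin (2 * d + 1)) :=
  SimpleGraph.fromRel (fun p q =>
    (q.val = p.val + 1) ∨ (p.val + q.val = 2 * d ∧ p.val < d))

namespace SimpleGraph.Subgraph.IsCycleSub

variable {V : Type*} {G : SimpleGraph V} {H K : G.Subgraph}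

theorem adj_of_adj_of_not_adj (hH : H.IsCycleSub) {v a b c : V} (ha : H.Adj v a)
    (hc : ¬H.Adj v c) (hG : ∀ w, G.Adj v w → w = a ∨ w = b ∨ w = c) : H.Adj v b := by
  by_contra hb
  have hsub : H.neighborSet v ⊆ {a} := fun w hw => by
    rcases hG w hw.adj_sub with rfl | rfl | rfl
    · rfl
    · exact absurd hw hb
    · exact absurd hw hc
  have := Set.ncard_le_ncard hsub
  rw [hH.2.2 v (H.edge_vert ha), Set.ncard_singleton] at this
  omega

theorem eq_of_le (hH : H.IsCycleSub) (hK : K.IsCycleSub) (hKH : K ≤ H) : K = H := by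
  have nbr : ∀ v ∈ K.verts, K.neighborSet v = H.neighborSet v := fun v hv =>
    Set.eq_of_subset_of_ncard_le (Subgraph.neighborSet_subset_of_subgraph hKH v)
      (by rw [hK.2.2 v hv, hH.2.2 v (hKH.1 hv)])
      (Set.finite_of_ncard_ne_zero (by rw [hH.2.2 v (hKH.1 hv)]; norm_num))
  -- `K.verts` is closed under `H`-adjacency, hence contains the connected `H.verts`
  have closed : ∀ (x y : H.verts), H.coe.Walk x y → x.1 ∈ K.verts → y.1 ∈ K.verts := by
    intro x y p
    induction p with
    | nil => exact id
    | cons hxy _ ih =>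
      intro hx
      have : K.Adj _ _ := (Set.ext_iff.mp (nbr _ hx) _).mpr hxy
      exact ih (K.edge_vert this.symm)
  obtain ⟨u, hu⟩ := hK.1
  have hverts : K.verts = H.verts := hKH.1.antisymm fun v hv =>
    closed ⟨u, hKH.1 hu⟩ ⟨v, hv⟩ (hH.2.1.preconnected _ _).some hu
  refine Subgraph.ext hverts (funext fun v => funext fun w => propext ?_)
  by_cases hv : v ∈ K.verts
  · exact Set.ext_iff.mp (nbr v hv) w
  · exact iff_of_false (fun h => hv (K.edge_vert h))
      fun h => hv (hverts ▸ H.edge_vert h)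

end SimpleGraph.Subgraph.IsCycleSub

namespace LGraph

variable {d : ℕ}

theorem adj_iff {u w : Fin (2 * d + 1)} :
    (LGraph d).Adj u w ↔
      u.val + 1 = w.val ∨ w.val + 1 = u.val ∨ (u.val + w.val = 2 * d ∧ u.val ≠ w.val) := by
  simp only [LGraph, fromRel_adj, ne_eq, Fin.ext_iff]
  omega

/-- The cycle `v_i v_(i+1) … v_(2d-i) v_i` closed by the `i`-th chord. -/
def chordCycle (d : ℕ) (i : Fin d) : (LGraph d).Subgraph where
  verts := {v | i.val ≤ v.val ∧ v.val ≤ 2 * d - i.val}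
  Adj u w := (i.val ≤ u.val ∧ w.val ≤ 2 * d - i.val ∧ u.val + 1 = w.val)
    ∨ (i.val ≤ w.val ∧ u.val ≤ 2 * d - i.val ∧ w.val + 1 = u.val)
    ∨ (u.val = i.val ∧ w.val = 2 * d - i.val) ∨ (w.val = i.val ∧ u.val = 2 * d - i.val)
  adj_sub h := by
    rw [adj_iff]
    have := i.isLt
    omega
  edge_vert h := by
    simp only [Set.mem_ofPred_eq]
    omega
  symm := ⟨fun _ _ h => by omega⟩

@[simp]
theorem mem_chordCycle_verts {i : Fin d} {v : Fin (2 * d + 1)} :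
    v ∈ (chordCycle d i).verts ↔ i.val ≤ v.val ∧ v.val ≤ 2 * d - i.val := Iff.rfl

@[simp]
theorem chordCycle_adj {i : Fin d} {u w : Fin (2 * d + 1)} :
    (chordCycle d i).Adj u w ↔ (i.val ≤ u.val ∧ w.val ≤ 2 * d - i.val ∧ u.val + 1 = w.val)
      ∨ (i.val ≤ w.val ∧ u.val ≤ 2 * d - i.val ∧ w.val + 1 = u.val)
      ∨ (u.val = i.val ∧ w.val = 2 * d - i.val) ∨ (w.val = i.val ∧ u.val = 2 * d - i.val) :=
  Iff.rfl

theorem ncard_chordCycle_verts (i : Fin d) :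
    (chordCycle d i).verts.ncard = 2 * (d - i.val) + 1 := by
  have himg : Fin.val '' (chordCycle d i).verts = Set.Icc i.val (2 * d - i.val) := by
    ext n
    simp only [Set.mem_image, Set.mem_Icc, mem_chordCycle_verts]
    constructor
    · rintro ⟨v, hv, rfl⟩
      exact hv
    · rintro hn
      exact ⟨⟨n, by omega⟩, hn, rfl⟩
  rw [← Set.ncard_image_of_injective _ Fin.val_injective, himg, ← Finset.coe_Icc,
    Set.ncard_coe_finset, Nat.card_Icc]
  omega

theorem chordCycle_injective : Function.Injective (chordCycle d) := by
  intro i j hij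
  have hi : (⟨i, by omega⟩ : Fin (2 * d + 1)) ∈ (chordCycle d j).verts := by
    rw [← hij]; simp only [mem_chordCycle_verts]; omega
  have hj : (⟨j, by omega⟩ : Fin (2 * d + 1)) ∈ (chordCycle d i).verts := by
    rw [hij]; simp only [mem_chordCycle_verts]; omega
  simp only [mem_chordCycle_verts] at hi hj
  omega

theorem chordCycle_connected (i : Fin d) : (chordCycle d i).coe.Connected := by
  have hi : (⟨i, by omega⟩ : Fin (2 * d + 1)) ∈ (chordCycle d i).verts := by
    simp only [mem_chordCycle_verts]; omega
  have reach : ∀ k (hik : i.val ≤ k) (hk : k ≤ 2 * d - i.val),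
      (chordCycle d i).coe.Reachable ⟨_, hi⟩ ⟨⟨k, by omega⟩, by simpa using ⟨hik, hk⟩⟩ := by
    intro k hik
    induction k, hik using Nat.le_induction with
    | base => exact fun _ => Reachable.refl _
    | succ k hik ih =>
      intro hk
      have hadj : (chordCycle d i).coe.Adj
          ⟨⟨k, by omega⟩, by simp only [mem_chordCycle_verts]; omega⟩
          ⟨⟨k + 1, by omega⟩, by simp only [mem_chordCycle_verts]; omega⟩ :=
        chordCycle_adj.mpr (Or.inl ⟨hik, hk, rfl⟩)
      exact (ih (by omega)).trans hadj.reachable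
  refine (connected_iff_exists_forall_reachable _).mpr ⟨⟨_, hi⟩, fun ⟨v, hv⟩ => ?_⟩
  simp only [mem_chordCycle_verts] at hv
  exact reach v hv.1 hv.2

theorem ncard_chordCycle_neighborSet (i : Fin d) {v : Fin (2 * d + 1)}
    (hv : v ∈ (chordCycle d i).verts) : ((chordCycle d i).neighborSet v).ncard = 2 := by
  simp only [mem_chordCycle_verts] at hv
  have := i.isLt
  let next : Fin (2 * d + 1) :=
    if h : v.val = 2 * d - i.val then ⟨i, by omega⟩ else ⟨v.val + 1, by omega⟩
  let prev : Fin (2 * d + 1) :=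
    if h : v.val = i.val then ⟨2 * d - i, by omega⟩ else ⟨v.val - 1, by omega⟩
  rw [Set.ncard_eq_two]
  refine ⟨next, prev, ?_, ?_⟩
  · simp only [next, prev, ne_eq]
    split_ifs <;> simp only [Fin.ext_iff] <;> omega
  · ext w
    simp only [Subgraph.mem_neighborSet, chordCycle_adj, Set.mem_insert_iff,
      Set.mem_singleton_iff, next, prev]
    split_ifs <;> simp only [Fin.ext_iff] <;> omega

theorem isCycleSub_chordCycle (i : Fin d) : (chordCycle d i).IsCycleSub :=
  ⟨⟨⟨i, by omega⟩, by simp only [mem_chordCycle_verts]; omega⟩, chordCycle_connected i,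
    fun _ => ncard_chordCycle_neighborSet i⟩

def ContainsPath (H : (LGraph d).Subgraph) (k : ℕ) : Prop :=
  ∀ u w : Fin (2 * d + 1), k ≤ u.val → w.val ≤ 2 * d - k → u.val + 1 = w.val → H.Adj u w

variable {H : (LGraph d).Subgraph}

theorem adj_of_val_eq {u w u' w' : Fin (2 * d + 1)} (h : H.Adj u w) (hu : u.val = u'.val)
    (hw : w.val = w'.val) : H.Adj u' w' :=
  Fin.ext hu ▸ Fin.ext hw ▸ h

theorem chordCycle_le {i : Fin d} (hpath : ContainsPath H i)
    (hchord : H.Adj ⟨i, by omega⟩ ⟨2 * d - i, by omega⟩) : chordCycle d i ≤ H := by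
  have := i.isLt
  constructor
  · intro v hv
    simp only [mem_chordCycle_verts] at hv
    by_cases hv' : v.val = 2 * d - i
    · exact H.edge_vert (adj_of_val_eq hchord.symm hv'.symm rfl)
    · exact H.edge_vert (hpath v ⟨v.val + 1, by omega⟩ hv.1 (by simp only; omega) rfl)
  · intro u w h
    rcases chordCycle_adj.mp h with ⟨hu, hw, huw⟩ | ⟨hw, hu, hwu⟩ | ⟨hu, hw⟩ | ⟨hw, hu⟩
    · exact hpath u w hu hw huw
    · exact (hpath w u hw hu hwu).symm
    · exact adj_of_val_eq hchord hu.symm hw.symm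
    · exact adj_of_val_eq hchord.symm hu.symm hw.symm

theorem eq_chordCycle (hH : H.IsCycleSub) {i : Fin d} (hpath : ContainsPath H i)
    (hchord : H.Adj ⟨i, by omega⟩ ⟨2 * d - i, by omega⟩) : H = chordCycle d i :=
  (hH.eq_of_le (isCycleSub_chordCycle i) (chordCycle_le hpath hchord)).symm

theorem containsPath_of_adj (hd : 1 ≤ d) (hH : H.IsCycleSub) {x y : Fin (2 * d + 1)}
    (hx : x.val = d - 1) (hy : y.val = d) (hf : H.Adj x y) : ContainsPath H (d - 1) := by
  have hnext : H.Adj ⟨d, by omega⟩ ⟨d + 1, by omega⟩ :=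
    hH.adj_of_adj_of_not_adj (adj_of_val_eq hf.symm hy rfl) (fun h => h.ne rfl)
      fun w hw => by
        simp only [adj_iff, Fin.ext_iff] at hw ⊢
        omega
  intro u w hu hw huw
  by_cases hud : u.val = d - 1
  · exact adj_of_val_eq hf (by omega) (by omega)
  · exact adj_of_val_eq hnext (by simp only; omega) (by simp only; omega)

theorem adj_zero_of_containsPath (hd : 0 < d) (hH : H.IsCycleSub) (hpath : ContainsPath H 0) :
    H.Adj ⟨0, by omega⟩ ⟨2 * d - 0, by omega⟩ :=
  hH.adj_of_adj_of_not_adj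
    (hpath ⟨0, by omega⟩ ⟨1, by omega⟩ le_rfl (by simp only; omega) rfl)
    (fun h => h.ne rfl) fun w hw => by
      simp only [adj_iff, Fin.ext_iff] at hw ⊢
      omega

theorem containsPath_of_not_adj (hH : H.IsCycleSub) {k : ℕ} (hk : k + 1 < d)
    (hpath : ContainsPath H (k + 1))
    (hchord : ¬H.Adj ⟨k + 1, by omega⟩ ⟨2 * d - (k + 1), by omega⟩) : ContainsPath H k := by
  have hlow : H.Adj ⟨k + 1, by omega⟩ ⟨k, by omega⟩ :=
    hH.adj_of_adj_of_not_adj (hpath ⟨k + 1, by omega⟩ ⟨k + 2, by omega⟩ le_rfl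
      (by simp only; omega) rfl) hchord fun w hw => by
        simp only [adj_iff, Fin.ext_iff] at hw ⊢
        omega
  have hhigh : H.Adj ⟨2 * d - (k + 1), by omega⟩ ⟨2 * d - k, by omega⟩ :=
    hH.adj_of_adj_of_not_adj (hpath ⟨2 * d - (k + 2), by omega⟩ ⟨2 * d - (k + 1), by omega⟩
      (by simp only; omega) le_rfl (by simp only; omega)).symm
      (fun h => hchord h.symm) fun w hw => by
        simp only [adj_iff, Fin.ext_iff] at hw ⊢
        omega
  intro u w hu hw huw
  by_cases huk : u.val = k
  · exact adj_of_val_eq hlow.symm huk.symm (by simp only; omega)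
  by_cases huk' : u.val = 2 * d - (k + 1)
  · exact adj_of_val_eq hhigh huk'.symm (by simp only; omega)
  · exact hpath u w (by omega) (by omega) huw

theorem exists_eq_chordCycle_of_containsPath (hH : H.IsCycleSub) :
    ∀ k < d, ContainsPath H k → ∃ i, H = chordCycle d i
  | 0, hk, hpath => ⟨⟨0, hk⟩, eq_chordCycle hH hpath (adj_zero_of_containsPath hk hH hpath)⟩
  | k + 1, hk, hpath => by
    by_cases hchord : H.Adj ⟨k + 1, by omega⟩ ⟨2 * d - (k + 1), by omega⟩
    · exact ⟨⟨k + 1, hk⟩, eq_chordCycle hH hpath hchord⟩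
    · exact exists_eq_chordCycle_of_containsPath hH k (by omega)
        (containsPath_of_not_adj hH hk hpath hchord)

theorem isCycleSub_and_adj_iff_mem_range (hd : 1 ≤ d) {x y : Fin (2 * d + 1)}
    (hx : x.val = d - 1) (hy : y.val = d) :
    H.IsCycleSub ∧ H.Adj x y ↔ H ∈ Set.range (chordCycle d) := by
  constructor
  · rintro ⟨hH, hf⟩
    obtain ⟨i, rfl⟩ := exists_eq_chordCycle_of_containsPath hH (d - 1) (by omega)
      (containsPath_of_adj hd hH hx hy hf)
    exact ⟨i, rfl⟩
  · rintro ⟨i, rfl⟩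
    have := i.isLt
    exact ⟨isCycleSub_chordCycle i,
      chordCycle_adj.mpr (Or.inl ⟨by omega, by omega, by omega⟩)⟩

theorem odd_ncard_chordCycle_verts (i : Fin d) : Odd (chordCycle d i).verts.ncard :=
  ⟨_, ncard_chordCycle_verts i⟩

theorem setOf_isCycleSub_odd_adj_eq_range (hd : 1 ≤ d) {x y : Fin (2 * d + 1)}
    (hx : x.val = d - 1) (hy : y.val = d) :
    {H : (LGraph d).Subgraph | H.IsCycleSub ∧ Odd H.verts.ncard ∧ H.Adj x y} =
      Set.range (chordCycle d) := by
  ext H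
  refine ⟨fun ⟨hH, _, hf⟩ => (isCycleSub_and_adj_iff_mem_range hd hx hy).mp ⟨hH, hf⟩, ?_⟩
  rintro ⟨i, rfl⟩
  obtain ⟨hcyc, hf⟩ := (isCycleSub_and_adj_iff_mem_range hd hx hy).mpr ⟨i, rfl⟩
  exact ⟨hcyc, odd_ncard_chordCycle_verts i, hf⟩

theorem setOf_isCycleSub_even_adj_eq_empty (hd : 1 ≤ d) {x y : Fin (2 * d + 1)}
    (hx : x.val = d - 1) (hy : y.val = d) :
    {H : (LGraph d).Subgraph | H.IsCycleSub ∧ Even H.verts.ncard ∧ H.Adj x y} = ∅ := by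
  refine Set.eq_empty_of_forall_notMem fun H ⟨hH, heven, hf⟩ => ?_
  obtain ⟨i, rfl⟩ := (isCycleSub_and_adj_iff_mem_range hd hx hy).mp ⟨hH, hf⟩
  exact Nat.not_even_iff_odd.mpr (odd_ncard_chordCycle_verts i) heven

end LGraph

theorem cOddE_cEvenE_LGraph_f2 (d : ℕ) (hd : 1 ≤ d) :
    cOddE (LGraph d) (⟨d - 1, by omega⟩ : Fin (2 * d + 1)) (⟨d, by omega⟩ : Fin (2 * d + 1)) = d ∧
      cEvenE (LGraph d) (⟨d - 1, by omega⟩ : Fin (2 * d + 1)) (⟨d, by omega⟩ : Fin (2 * d + 1))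
        = 0 := by
  constructor
  · rw [cOddE, LGraph.setOf_isCycleSub_odd_adj_eq_range hd rfl rfl,
      Set.ncard_range_of_injective LGraph.chordCycle_injective, Nat.card_fin]
  · rw [cEvenE, LGraph.setOf_isCycleSub_even_adj_eq_empty hd rfl rfl, Set.ncard_empty]
end

section
/- For every integer d ≥ 1, c_e(H_d) / c_o(H_d) = d − 1/2 (equivalently, 2·c_e(H_d) = (2d−1)·c_o(H_d)); consequently the real sequence d ↦ c_e(H_d)/c_o(H_d) tends to infinity as d → ∞. -/
open SimpleGraph Filter

/-- The inclusion of the vertices of the second copy of `L_d` into the vertex set of `H_d`: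
`v_(d-1)` and `v_d` are identified with the corresponding vertices of the first copy. -/
def embH (d : ℕ) (i : Fin (2 * d + 1)) : Fin (2 * d + 1) ⊕ Fin (2 * d - 1) :=
  if h1 : i.val = d - 1 ∨ i.val = d then Sum.inl i
  else if h2 : i.val < d - 1 then Sum.inr ⟨i.val, by omega⟩
  else Sum.inr ⟨i.val - 2, by push_neg at h1; have := i.isLt; omega⟩

/-- The graph `H_d`, obtained from two disjoint copies of `L_d` by identifying the two
copies of `v_(d-1)` and the two copies of `v_d` (and hence the two edges `v_(d-1) v_d`). -/
def HGraph (d : ℕ) : SimpleGraph (Fin (2 * d + 1) ⊕ Fin (2 * d - 1)) :=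
  SimpleGraph.fromRel (fun x y =>
    (∃ i j, (LGraph d).Adj i j ∧ x = Sum.inl i ∧ y = Sum.inl j) ∨
    (∃ i j, (LGraph d).Adj i j ∧ x = embH d i ∧ y = embH d j))

/-!
Gluing the two copies of `L_d` along `v_(d-1) v_d` makes `H_d` a ladder: a bottom path on
`2d + 1` vertices and a top path on `2d - 1` vertices, the `k`-th bottom vertex being joined to
the `g k`-th top vertex, where `g` is monotone and grows by one at every step except at
`k = d, d + 1` (the three rungs `k = d - 1, d, d + 1` all end at `v_(d-1)`).

In a ladder every cycle is cut out by two rungs `i < j`. Indeed, at its lowest bottom vertex `i`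
a cycle has to use the rung and the next bottom edge; following the bottom path up to the first
vertex `j` where it leaves, degree two forbids the rungs strictly between `i` and `j` and then
forces the whole top segment from `g i` to `g j`. So the cycle contains the one cut out by `i` and
`j`, and a cycle contains no other cycle.

Hence the cycles correspond to the `(2d+1 choose 2) = d (2d + 1)` pairs `i < j`, the cycle of `(i, j)`
having `(j - i) + (g j - g i) + 2` vertices. Modulo two this counts the stalls `d, d + 1` of `g`
in `(i, j]`, so the cycle is odd iff `i = d` or `j = d`: `c_o = 2d` and `c_e = d (2d - 1)`.
-/

namespace SimpleGraph

variable {V : Type*} {G : SimpleGraph V}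

namespace Subgraph.IsCycleSub

variable {H : G.Subgraph} {v x y z : V}

lemma adj_of_neighborSet_subset (hH : H.IsCycleSub) (hv : v ∈ H.verts)
    (hsub : H.neighborSet v ⊆ {x, y}) : H.Adj v x ∧ H.Adj v y := by
  have hle : ({x, y} : Set V).ncard ≤ (H.neighborSet v).ncard := by
    rw [hH.2.2 v hv]; exact (Set.ncard_insert_le _ _).trans (by simp)
  have heq := Set.eq_of_subset_of_ncard_le hsub hle
  exact ⟨show x ∈ H.neighborSet v by simp [heq], show y ∈ H.neighborSet v by simp [heq]⟩

lemma not_neighborSet_subset_singleton (hH : H.IsCycleSub) (hv : v ∈ H.verts) :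
    ¬H.neighborSet v ⊆ {x} := fun hsub => by
  have := Set.ncard_le_ncard hsub
  rw [hH.2.2 v hv, Set.ncard_singleton] at this
  omega

lemma eq_or_eq_of_adj (hH : H.IsCycleSub) (hxy : x ≠ y) (hx : H.Adj v x) (hy : H.Adj v y)
    (hz : H.Adj v z) : z = x ∨ z = y := by
  have hsub : ({x, y} : Set V) ⊆ H.neighborSet v :=
    Set.insert_subset hx (Set.singleton_subset_iff.2 hy)
  have heq := Set.eq_of_subset_of_ncard_le hsub
    (by rw [Set.ncard_pair hxy, hH.2.2 v (H.edge_vert hx)])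
    (Set.finite_of_ncard_pos (by rw [hH.2.2 v (H.edge_vert hx)]; omega))
  have : z ∈ ({x, y} : Set V) := heq ▸ hz
  simpa using this

/-- Degree two forces every edge of `H` at a vertex of `C` into `C`, and connectedness of `H`
spreads this to all of `H`. -/
lemma eq_of_le_s13 {C : G.Subgraph} (hH : H.IsCycleSub) (hC : C.IsCycleSub) (hle : C ≤ H) :
    C = H := by
  have hN : ∀ v ∈ C.verts, C.neighborSet v = H.neighborSet v := fun v hv =>
    Set.eq_of_subset_of_ncard_le (fun w hw => hle.2 hw)
      (by rw [hC.2.2 v hv, hH.2.2 v (hle.1 hv)])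
      (Set.finite_of_ncard_pos (by rw [hH.2.2 v (hle.1 hv)]; omega))
  have hstep : ∀ {x y}, x ∈ C.verts → H.Adj x y → C.Adj x y := fun {x y} hx hxy => by
    have : y ∈ H.neighborSet _ := hxy
    rwa [← hN _ hx] at this
  have hverts : H.verts ⊆ C.verts := by
    obtain ⟨v₀, hv₀⟩ := hC.1
    intro u hu
    obtain ⟨w⟩ := hH.2.1.preconnected ⟨v₀, hle.1 hv₀⟩ ⟨u, hu⟩
    suffices ∀ {a b : H.verts} (w : H.coe.Walk a b), a.1 ∈ C.verts → b.1 ∈ C.verts from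
      this w hv₀
    intro a b w
    induction w with
    | nil => exact id
    | cons h _ ih => exact fun ha => ih (C.edge_vert (hstep ha h).symm)
  refine Subgraph.ext (hle.1.antisymm hverts) ?_
  ext x y
  exact ⟨fun h => hle.2 h, fun h => hstep (hverts (H.edge_vert h)) h⟩

end Subgraph.IsCycleSub

namespace Walk

def along (f : ℕ → V) (a : ℕ) :
    (l : ℕ) → (∀ k < l, G.Adj (f (a + k)) (f (a + k + 1))) → G.Walk (f a) (f (a + l))
  | 0, _ => nil
  | l + 1, h => (along f a l fun k hk => h k (by omega)).concat (h l (by omega))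

variable {f : ℕ → V} {a l : ℕ} {h : ∀ k < l, G.Adj (f (a + k)) (f (a + k + 1))}

lemma length_along : (along f a l h).length = l := by
  induction l with
  | zero => rfl
  | succ l ih => simp [along, ih]

lemma mem_support_along {v : V} : v ∈ (along f a l h).support ↔ ∃ k ≤ l, f (a + k) = v := by
  induction l with
  | zero => simp [along, eq_comm]
  | succ l ih =>
    simp only [along, support_concat, List.mem_append, ih, List.mem_singleton]
    constructor
    · rintro (⟨k, hk, rfl⟩ | rfl)
      exacts [⟨k, by omega, rfl⟩, ⟨l + 1, le_rfl, rfl⟩]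
    · rintro ⟨k, hk, rfl⟩
      rcases Nat.lt_or_ge k (l + 1) with hk' | hk'
      · exact Or.inl ⟨k, by omega, rfl⟩
      · obtain rfl : k = l + 1 := by omega
        exact Or.inr rfl

lemma isPath_along (hf : Set.InjOn f (Set.Icc a (a + l))) : (along f a l h).IsPath := by
  induction l with
  | zero => exact IsPath.nil
  | succ l ih =>
    refine (ih (hf.mono (Set.Icc_subset_Icc_right (by omega)))).concat ?_ _
    rw [mem_support_along]
    rintro ⟨k, hk, hfk⟩
    have := hf ⟨by omega, by omega⟩ ⟨by omega, by omega⟩ hfk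
    omega

lemma toSubgraph_along_le {H : G.Subgraph} (ha : f a ∈ H.verts)
    (hH : ∀ k < l, H.Adj (f (a + k)) (f (a + k + 1))) :
    (along f a l h).toSubgraph ≤ H := by
  induction l with
  | zero => simpa [along] using ha
  | succ l ih =>
    simp only [along, concat_eq_append, toSubgraph_append, toSubgraph_cons_nil_eq_subgraphOfAdj]
    exact sup_le (ih fun k hk => hH k (by omega)) (subgraphOfAdj_le_of_adj H (hH l (by omega)))

lemma IsPath.isCycle_cons {u v : V} {p : G.Walk v u} (hp : p.IsPath) (h : G.Adj u v)
    (hl : 2 ≤ p.length) :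
    (cons h p).IsCycle :=
  isCycle_iff_isPath_tail_and_le_length.2 ⟨by simpa using hp, by simp; omega⟩

end Walk

/-- A ladder with rails `bot 0, …, bot n` and `top 0, …, top m` and rungs `bot k — top (g k)`,
which do not cross since `g` is monotone. Values of `bot` and `top` beyond `n` and `m` are junk. -/
structure Ladder (G : SimpleGraph V) (n m : ℕ) (g : ℕ → ℕ) where
  bot : ℕ → V
  top : ℕ → V
  bot_injOn : Set.InjOn bot (Set.Iic n)
  top_injOn : Set.InjOn top (Set.Iic m)
  bot_ne_top {k t : ℕ} : k ≤ n → t ≤ m → bot k ≠ top t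
  bot_or_top (v : V) : (∃ k ≤ n, bot k = v) ∨ ∃ t ≤ m, top t = v
  adj_bot_bot {k k' : ℕ} : k ≤ n → k' ≤ n →
    (G.Adj (bot k) (bot k') ↔ k' = k + 1 ∨ k = k' + 1)
  adj_top_top {t t' : ℕ} : t ≤ m → t' ≤ m →
    (G.Adj (top t) (top t') ↔ t' = t + 1 ∨ t = t' + 1)
  adj_bot_top {k t : ℕ} : k ≤ n → t ≤ m → (G.Adj (bot k) (top t) ↔ t = g k)
  monotone_rung : Monotone g
  rung_le {k : ℕ} : k ≤ n → g k ≤ m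

namespace Ladder

variable {n m : ℕ} {g : ℕ → ℕ} (L : G.Ladder n m g) {i j k t : ℕ} {v w : V}

lemma bot_inj {k' : ℕ} (hk : k ≤ n) (hk' : k' ≤ n) : L.bot k = L.bot k' ↔ k = k' :=
  ⟨fun h => L.bot_injOn hk hk' h, congrArg _⟩

lemma adj_bot_succ (hk : k < n) : G.Adj (L.bot k) (L.bot (k + 1)) :=
  (L.adj_bot_bot hk.le hk).2 (Or.inl rfl)

lemma adj_top_succ (ht : t < m) : G.Adj (L.top t) (L.top (t + 1)) :=
  (L.adj_top_top ht.le ht).2 (Or.inl rfl)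

lemma adj_rung (hk : k ≤ n) : G.Adj (L.bot k) (L.top (g k)) :=
  (L.adj_bot_top hk (L.rung_le hk)).2 rfl

lemma eq_of_adj_bot (hk : k ≤ n) (h : G.Adj (L.bot k) w) :
    (0 < k ∧ w = L.bot (k - 1)) ∨ (k < n ∧ w = L.bot (k + 1)) ∨ w = L.top (g k) := by
  rcases L.bot_or_top w with ⟨k', hk', rfl⟩ | ⟨t, ht, rfl⟩
  · rcases (L.adj_bot_bot hk hk').1 h with rfl | rfl
    · exact Or.inr (Or.inl ⟨by omega, rfl⟩)
    · exact Or.inl ⟨by omega, rfl⟩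
  · exact Or.inr (Or.inr (by rw [(L.adj_bot_top hk ht).1 h]))

lemma eq_of_adj_top (ht : t ≤ m) (h : G.Adj (L.top t) w) :
    (0 < t ∧ w = L.top (t - 1)) ∨ (t < m ∧ w = L.top (t + 1)) ∨
      ∃ k ≤ n, g k = t ∧ w = L.bot k := by
  rcases L.bot_or_top w with ⟨k, hk, rfl⟩ | ⟨t', ht', rfl⟩
  · exact Or.inr (Or.inr ⟨k, hk, ((L.adj_bot_top hk ht).1 h.symm).symm, rfl⟩)
  · rcases (L.adj_top_top ht ht').1 h with rfl | rfl
    · exact Or.inr (Or.inl ⟨by omega, rfl⟩)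
    · exact Or.inl ⟨by omega, rfl⟩

def cycleWalk (i j : ℕ) (hij : i < j) (hj : j ≤ n) : G.Walk (L.bot i) (L.bot i) :=
  have hg : g i ≤ g j := L.monotone_rung hij.le
  .cons (L.adj_rung (hij.le.trans hj)) <|
    (Walk.along L.top (g i) (g j - g i) fun _ _ =>
      L.adj_top_succ (by have := L.rung_le hj; omega)).append <|
    .cons (by rw [Nat.add_sub_cancel' hg, Nat.add_sub_cancel' hij.le]; exact (L.adj_rung hj).symm)
      (Walk.along L.bot i (j - i) fun _ _ => L.adj_bot_succ (by omega)).reverse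

lemma mem_support_cycleWalk {hij : i < j} {hj : j ≤ n} :
    v ∈ (L.cycleWalk i j hij hj).support ↔
      (∃ k, i ≤ k ∧ k ≤ j ∧ L.bot k = v) ∨
        ∃ t, g i ≤ t ∧ t ≤ g j ∧ L.top t = v := by
  have hg : g i ≤ g j := L.monotone_rung hij.le
  simp only [cycleWalk, Walk.support_cons, Walk.support_append, Walk.support_reverse,
    List.tail_cons, List.mem_cons, List.mem_append, List.mem_reverse, Walk.mem_support_along]
  constructor
  · rintro (rfl | ⟨t, ht, rfl⟩ | ⟨k, hk, rfl⟩)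
    · exact Or.inl ⟨i, le_rfl, hij.le, rfl⟩
    · exact Or.inr ⟨g i + t, by omega, by omega, rfl⟩
    · exact Or.inl ⟨i + k, by omega, by omega, rfl⟩
  · rintro (⟨k, hik, hkj, rfl⟩ | ⟨t, hit, htj, rfl⟩)
    · exact Or.inr (Or.inr ⟨k - i, by omega, by rw [Nat.add_sub_cancel' hik]⟩)
    · exact Or.inr (Or.inl ⟨t - g i, by omega, by rw [Nat.add_sub_cancel' hit]⟩)

lemma isCycle_cycleWalk {hij : i < j} {hj : j ≤ n} : (L.cycleWalk i j hij hj).IsCycle := by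
  have hgi := L.monotone_rung hij.le
  have hgj := L.rung_le hj
  refine Walk.IsPath.isCycle_cons ?_ _ (by simp [Walk.length_along]; omega)
  rw [Walk.isPath_def, Walk.support_append, Walk.support_cons, List.tail_cons,
    Walk.support_reverse, List.nodup_append, List.nodup_reverse]
  refine ⟨(Walk.isPath_along (L.top_injOn.mono fun x hx => ?_)).support_nodup,
    (Walk.isPath_along (L.bot_injOn.mono fun x hx => ?_)).support_nodup, ?_⟩
  · have := hx.2; simp only [Set.mem_Iic]; omega
  · have := hx.2; simp only [Set.mem_Iic]; omega
  · simp only [List.mem_reverse, Walk.mem_support_along]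
    rintro _ ⟨t, ht, rfl⟩ _ ⟨k, hk, rfl⟩ h
    exact L.bot_ne_top (by omega) (by omega) h.symm

def cycle (i j : ℕ) : G.Subgraph :=
  if h : i < j ∧ j ≤ n then (L.cycleWalk i j h.1 h.2).toSubgraph else ⊥

section

variable {L}

lemma cycle_eq (hij : i < j) (hj : j ≤ n) :
    L.cycle i j = (L.cycleWalk i j hij hj).toSubgraph :=
  dif_pos ⟨hij, hj⟩

lemma isCycleSub_cycle (hij : i < j) (hj : j ≤ n) : (L.cycle i j).IsCycleSub := by
  rw [cycle_eq hij hj]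
  exact ⟨⟨_, Walk.start_mem_verts_toSubgraph _⟩, (Walk.toSubgraph_connected _).coe,
    fun v hv => L.isCycle_cycleWalk.ncard_neighborSet_toSubgraph_eq_two
      (Walk.mem_verts_toSubgraph _ |>.1 hv)⟩

lemma verts_cycle (hij : i < j) (hj : j ≤ n) :
    (L.cycle i j).verts = L.bot '' Set.Icc i j ∪ L.top '' Set.Icc (g i) (g j) := by
  ext v
  rw [cycle_eq hij hj, Walk.mem_verts_toSubgraph, mem_support_cycleWalk]
  simp only [Set.mem_union, Set.mem_image, Set.mem_Icc, and_assoc]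

lemma ncard_verts_cycle (hij : i < j) (hj : j ≤ n) :
    (L.cycle i j).verts.ncard = j + 1 - i + (g j + 1 - g i) := by
  have hgj := L.rung_le hj
  have hbot : Set.InjOn L.bot (Set.Icc i j) := L.bot_injOn.mono fun _ hx => hx.2.trans hj
  have htop : Set.InjOn L.top (Set.Icc (g i) (g j)) := L.top_injOn.mono fun _ hx => hx.2.trans hgj
  rw [verts_cycle hij hj, Set.ncard_union_eq, hbot.ncard_image, htop.ncard_image,
    Set.ncard_Icc_nat, Set.ncard_Icc_nat]
  rw [Set.disjoint_left]
  rintro _ ⟨k, hk, rfl⟩ ⟨t, ht, h⟩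
  exact L.bot_ne_top (hk.2.trans hj) (ht.2.trans hgj) h.symm

lemma bot_mem_verts_cycle (hij : i < j) (hj : j ≤ n) (hk : k ≤ n) :
    L.bot k ∈ (L.cycle i j).verts ↔ i ≤ k ∧ k ≤ j := by
  rw [verts_cycle hij hj]
  constructor
  · rintro (⟨k', hk', h⟩ | ⟨t, ht, h⟩)
    · rwa [← (L.bot_inj (hk'.2.trans hj) hk).1 h]
    · exact absurd h.symm (L.bot_ne_top hk (ht.2.trans (L.rung_le hj)))
  · exact fun hk' => Or.inl ⟨k, hk', rfl⟩

lemma cycle_injOn :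
    Set.InjOn (fun x : ℕ × ℕ => L.cycle x.1 x.2) {x | x.1 < x.2 ∧ x.2 ≤ n} := by
  rintro ⟨i, j⟩ ⟨hij, hj⟩ ⟨i', j'⟩ ⟨hij', hj'⟩ h
  have key : ∀ k ≤ n, (i ≤ k ∧ k ≤ j ↔ i' ≤ k ∧ k ≤ j') := fun k hk => by
    rw [← bot_mem_verts_cycle hij hj hk, ← bot_mem_verts_cycle hij' hj' hk]
    exact Iff.of_eq (congrArg (L.bot k ∈ ·.verts) h)
  have := key i (by omega); have := key i' (by omega)
  have := key j hj; have := key j' hj'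
  simp only [Prod.mk.injEq]
  omega

end

variable {H : G.Subgraph}

lemma exists_bot_mem (hH : H.IsCycleSub) : ∃ k ≤ n, L.bot k ∈ H.verts := by
  classical
  by_contra! hno
  obtain ⟨v, hv⟩ := hH.1
  obtain ⟨t₀, ht₀, rfl⟩ : ∃ t ≤ m, L.top t = v :=
    (L.bot_or_top v).resolve_left fun ⟨k, hk, h⟩ => hno k hk (h ▸ hv)
  set t := Nat.findGreatest (L.top · ∈ H.verts) m
  have ht : L.top t ∈ H.verts := Nat.findGreatest_spec (P := (L.top · ∈ H.verts)) ht₀ hv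
  refine hH.not_neighborSet_subset_singleton ht (x := L.top (t - 1)) fun w (hw : H.Adj _ w) => ?_
  rcases L.eq_of_adj_top (Nat.findGreatest_le m) (H.adj_sub hw) with
    ⟨-, rfl⟩ | ⟨htm, rfl⟩ | ⟨k, hk, -, rfl⟩
  · rfl
  · exact absurd (H.edge_vert hw.symm) (Nat.findGreatest_is_greatest (Nat.lt_succ_self _) htm)
  · exact absurd (H.edge_vert hw.symm) (hno k hk)

lemma adj_of_bot_mem_of_forall_le (hH : H.IsCycleSub) (hin : i ≤ n) (hi : L.bot i ∈ H.verts)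
    (hmin : ∀ k ≤ n, L.bot k ∈ H.verts → i ≤ k) :
    i < n ∧ H.Adj (L.bot i) (L.bot (i + 1)) ∧ H.Adj (L.bot i) (L.top (g i)) := by
  have hnbr : ∀ w, H.Adj (L.bot i) w → (i < n ∧ w = L.bot (i + 1)) ∨ w = L.top (g i) := by
    intro w hw
    rcases L.eq_of_adj_bot hin (H.adj_sub hw) with ⟨hi0, rfl⟩ | h | h
    · exact absurd (hmin _ (by omega) (H.edge_vert hw.symm)) (by omega)
    · exact Or.inl h
    · exact Or.inr h
  rcases Nat.lt_or_ge i n with hlt | hge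
  · refine ⟨hlt, hH.adj_of_neighborSet_subset hi fun w hw => ?_⟩
    rcases hnbr w hw with ⟨-, rfl⟩ | rfl <;> simp
  · refine absurd (fun w hw => ?_) (hH.not_neighborSet_subset_singleton hi (x := L.top (g i)))
    rcases hnbr w hw with ⟨h, -⟩ | rfl
    · omega
    · rfl

lemma adj_rung_of_not_adj_bot_succ (hH : H.IsCycleSub) (hij : i < j) (hj : j ≤ n)
    (hpath : ∀ k, i ≤ k → k < j → H.Adj (L.bot k) (L.bot (k + 1)))
    (hstop : j < n → ¬H.Adj (L.bot j) (L.bot (j + 1))) : H.Adj (L.bot j) (L.top (g j)) := by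
  have hprev : H.Adj (L.bot j) (L.bot (j - 1)) := by
    simpa [Nat.sub_add_cancel (by omega : 1 ≤ j)] using (hpath (j - 1) (by omega) (by omega)).symm
  refine (hH.adj_of_neighborSet_subset (H.edge_vert hprev) (x := L.bot (j - 1)) fun w hw => ?_).2
  rcases L.eq_of_adj_bot hj (H.adj_sub hw) with ⟨-, rfl⟩ | ⟨hjn, rfl⟩ | rfl
  · simp
  · exact absurd hw (hstop hjn)
  · simp

lemma not_adj_rung_of_lt_of_lt (hH : H.IsCycleSub) (hik : i < k) (hkj : k < j) (hj : j ≤ n)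
    (hpath : ∀ k, i ≤ k → k < j → H.Adj (L.bot k) (L.bot (k + 1))) :
    ¬H.Adj (L.bot k) (L.top (g k)) := fun h => by
  have hdown : H.Adj (L.bot k) (L.bot (k - 1)) := by
    simpa [Nat.sub_add_cancel (by omega : 1 ≤ k)] using (hpath (k - 1) (by omega) (by omega)).symm
  have hne : L.bot (k - 1) ≠ L.bot (k + 1) := (L.bot_inj (by omega) (by omega)).not.2 (by omega)
  rcases hH.eq_or_eq_of_adj hne hdown (hpath k hik.le hkj) h with h' | h' <;>
    exact L.bot_ne_top (by omega) (L.rung_le (by omega)) h'.symm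

lemma rung_le_of_top_mem (hH : H.IsCycleSub) (hmin : ∀ k ≤ n, L.bot k ∈ H.verts → i ≤ k)
    (ht : t ≤ m) (htH : L.top t ∈ H.verts) : g i ≤ t := by
  classical
  have hex : ∃ t, t ≤ m ∧ L.top t ∈ H.verts := ⟨t, ht, htH⟩
  obtain ⟨ht₀m, ht₀⟩ := Nat.find_spec hex
  refine le_trans ?_ (Nat.find_min' hex ⟨ht, htH⟩)
  by_contra! hlt
  refine hH.not_neighborSet_subset_singleton ht₀ (x := L.top (Nat.find hex + 1))
    fun w (hw : H.Adj _ w) => ?_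
  rcases L.eq_of_adj_top ht₀m (H.adj_sub hw) with
    ⟨h0, rfl⟩ | ⟨-, rfl⟩ | ⟨k, hk, hgk, rfl⟩
  · exact absurd ⟨by omega, H.edge_vert hw.symm⟩
      (Nat.find_min hex (by omega : Nat.find hex - 1 < _))
  · rfl
  · exact absurd (L.monotone_rung (hmin k hk (H.edge_vert hw.symm))) (by omega)

lemma eq_of_adj_top_of_lt (hH : H.IsCycleSub) (hmin : ∀ k ≤ n, L.bot k ∈ H.verts → i ≤ k)
    (hj : j ≤ n) (hpath : ∀ k, i ≤ k → k < j → H.Adj (L.bot k) (L.bot (k + 1)))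
    (htj : t < g j) (hw : H.Adj (L.top t) w) :
    w = L.top (t + 1) ∨ (t = g i ∧ w = L.bot i) ∨ (g i < t ∧ w = L.top (t - 1)) := by
  have htm : t ≤ m := by have := L.rung_le hj; omega
  rcases L.eq_of_adj_top htm (H.adj_sub hw) with
    ⟨h0, rfl⟩ | ⟨-, rfl⟩ | ⟨k, hk, rfl, rfl⟩
  · have := L.rung_le_of_top_mem hH hmin (by omega) (H.edge_vert hw.symm)
    exact Or.inr (Or.inr ⟨by omega, rfl⟩)
  · exact Or.inl rfl
  · have hik := hmin k hk (H.edge_vert hw.symm)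
    have hkj : k < j := lt_of_not_ge fun h => absurd (L.monotone_rung h) (by omega)
    rcases hik.eq_or_lt with rfl | hik
    · exact Or.inr (Or.inl ⟨rfl, rfl⟩)
    · exact absurd hw.symm (L.not_adj_rung_of_lt_of_lt hH hik hkj hj hpath)

lemma adj_top_succ_of_lt (hH : H.IsCycleSub) (hmin : ∀ k ≤ n, L.bot k ∈ H.verts → i ≤ k)
    (hj : j ≤ n) (hpath : ∀ k, i ≤ k → k < j → H.Adj (L.bot k) (L.bot (k + 1)))
    (hrung : H.Adj (L.bot i) (L.top (g i))) (hit : g i ≤ t) (htj : t < g j) :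
    H.Adj (L.top t) (L.top (t + 1)) := by
  induction t, hit using Nat.le_induction with
  | base =>
    refine (hH.adj_of_neighborSet_subset (H.edge_vert hrung.symm) (y := L.bot i)
      fun w hw => ?_).1
    rcases L.eq_of_adj_top_of_lt hH hmin hj hpath htj hw with rfl | ⟨-, rfl⟩ | ⟨h, -⟩
    · simp
    · simp
    · omega
  | succ t hit ih =>
    have hprev := ih (by omega)
    refine (hH.adj_of_neighborSet_subset (H.edge_vert hprev.symm) (y := L.top t)
      fun w hw => ?_).1
    rcases L.eq_of_adj_top_of_lt hH hmin hj hpath htj hw with rfl | ⟨h, -⟩ | ⟨-, rfl⟩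
    · simp
    · omega
    · simp

lemma cycle_le (hij : i < j) (hj : j ≤ n)
    (hpath : ∀ k, i ≤ k → k < j → H.Adj (L.bot k) (L.bot (k + 1)))
    (htop : ∀ t, g i ≤ t → t < g j → H.Adj (L.top t) (L.top (t + 1)))
    (hrung_i : H.Adj (L.bot i) (L.top (g i))) (hrung_j : H.Adj (L.bot j) (L.top (g j))) :
    L.cycle i j ≤ H := by
  rw [cycle_eq hij hj]
  simp only [cycleWalk, Walk.toSubgraph, Walk.toSubgraph_append, Walk.toSubgraph_reverse]
  refine sup_le (subgraphOfAdj_le_of_adj H hrung_i) (sup_le ?_ (sup_le ?_ ?_))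
  · exact Walk.toSubgraph_along_le (H.edge_vert hrung_i.symm) fun k hk =>
      htop _ (by omega) (by omega)
  · refine subgraphOfAdj_le_of_adj H ?_
    rw [Nat.add_sub_cancel' (L.monotone_rung hij.le), Nat.add_sub_cancel' hij.le]
    exact hrung_j.symm
  · exact Walk.toSubgraph_along_le (H.edge_vert hrung_i) fun k hk => hpath _ (by omega) (by omega)

theorem exists_cycle_eq (hH : H.IsCycleSub) : ∃ i j, i < j ∧ j ≤ n ∧ L.cycle i j = H := by
  classical
  have hex := L.exists_bot_mem hH
  obtain ⟨hin, hi⟩ := Nat.find_spec hex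
  have hmin : ∀ k ≤ n, L.bot k ∈ H.verts → Nat.find hex ≤ k :=
    fun k hk h => Nat.find_min' hex ⟨hk, h⟩
  set i := Nat.find hex
  obtain ⟨hin', hfirst, hrung_i⟩ := L.adj_of_bot_mem_of_forall_le hH hin hi hmin
  -- `[i, j]` is the longest run of bottom edges of `H` starting at `i`
  let P k := ∀ k', i ≤ k' → k' < k → H.Adj (L.bot k') (L.bot (k' + 1))
  have hP : P (i + 1) := fun k' h1 h2 => (show k' = i by omega) ▸ hfirst
  set j := Nat.findGreatest P n
  have hij : i < j := Nat.le_findGreatest hin' hP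
  have hj : j ≤ n := Nat.findGreatest_le n
  have hpath : P j := Nat.findGreatest_spec hin' hP
  have hstop : j < n → ¬H.Adj (L.bot j) (L.bot (j + 1)) := fun hjn h =>
    Nat.findGreatest_is_greatest (Nat.lt_succ_self j) hjn fun k' h1 h2 =>
      (Nat.lt_succ_iff.1 h2).lt_or_eq.elim (hpath k' h1) fun e => e ▸ h
  have hrung_j := L.adj_rung_of_not_adj_bot_succ hH hij hj hpath hstop
  have htop := fun t hit htj => L.adj_top_succ_of_lt hH hmin hj hpath hrung_i (t := t) hit htj
  exact ⟨i, j, hij, hj,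
    hH.eq_of_le_s13 (isCycleSub_cycle hij hj) (L.cycle_le hij hj hpath htop hrung_i hrung_j)⟩

open Finset in
lemma ncard_setOf_isCycleSub (L : G.Ladder n m g) (P : ℕ → Prop) [DecidablePred P] :
    {H : G.Subgraph | H.IsCycleSub ∧ P H.verts.ncard}.ncard =
      #{x ∈ range (n + 1) ×ˢ range (n + 1) |
        x.1 < x.2 ∧ P (x.2 + 1 - x.1 + (g x.2 + 1 - g x.1))} := by
  have hS : {H : G.Subgraph | H.IsCycleSub ∧ P H.verts.ncard} =
      (fun x : ℕ × ℕ => L.cycle x.1 x.2) '' ↑{x ∈ range (n + 1) ×ˢ range (n + 1) |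
        x.1 < x.2 ∧ P (x.2 + 1 - x.1 + (g x.2 + 1 - g x.1))} := by
    ext H
    simp only [Set.mem_ofPred_eq, Set.mem_image, coe_filter, mem_product, mem_range]
    constructor
    · rintro ⟨hH, hP⟩
      obtain ⟨i, j, hij, hj, rfl⟩ := L.exists_cycle_eq hH
      exact ⟨(i, j), ⟨⟨by omega, by omega⟩, hij, ncard_verts_cycle hij hj ▸ hP⟩, rfl⟩
    · rintro ⟨⟨i, j⟩, ⟨⟨-, hj⟩, hij, hP⟩, rfl⟩
      exact ⟨isCycleSub_cycle hij (by omega),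
        (ncard_verts_cycle (L := L) hij (by omega)).symm ▸ hP⟩
  rw [hS, Set.InjOn.ncard_image, Set.ncard_coe_finset]
  refine L.cycle_injOn.mono fun x hx => ?_
  simp only [coe_filter, mem_product, mem_range, Set.mem_ofPred_eq] at hx ⊢
  omega

open Finset in
lemma cOdd_add_cEven (L : G.Ladder n m g) : cOdd G + cEven G = (n + 1).choose 2 := by
  have hpairs := card_product_filter_lt (s := range (n + 1))
  rw [card_range] at hpairs
  rw [cOdd, cEven, L.ncard_setOf_isCycleSub, L.ncard_setOf_isCycleSub, ← hpairs,
    ← card_filter_add_card_filter_not (s := {x ∈ range (n + 1) ×ˢ range (n + 1) | x.1 < x.2})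
      (p := fun x : ℕ × ℕ => Odd (x.2 + 1 - x.1 + (g x.2 + 1 - g x.1))),
    filter_filter, filter_filter]
  simp only [Nat.not_odd_iff_even]

end Ladder

end SimpleGraph

namespace HGraph

variable {d i j : ℕ}

/-- Adjacency in `L_d` of the vertices `v_x` and `v_y`. -/
def LAdj (d x y : ℕ) : Prop :=
  x ≠ y ∧ (y = x + 1 ∨ x = y + 1 ∨ (x + y = 2 * d ∧ (x < d ∨ y < d)))

/-- The index `i` of the vertex `v_i` of the second copy of `L_d` that `Sum.inr q` stands for. -/
def secondIndex (d q : ℕ) : ℕ := if q + 1 ≤ d - 1 then q else q + 2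

lemma LGraph_adj {p q : Fin (2 * d + 1)} : (LGraph d).Adj p q ↔ LAdj d p q := by
  simp only [LGraph, fromRel_adj, LAdj, ne_eq, Fin.ext_iff]
  omega

lemma embH_eq_inl {i p : Fin (2 * d + 1)} :
    embH d i = Sum.inl p ↔ i = p ∧ (p.val = d - 1 ∨ p.val = d) := by
  unfold embH
  split_ifs <;> simp_all [Fin.ext_iff] <;> omega

lemma embH_eq_inr {i : Fin (2 * d + 1)} {q : Fin (2 * d - 1)} :
    embH d i = Sum.inr q ↔ i.val = secondIndex d q := by
  have := q.isLt
  unfold embH secondIndex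
  split_ifs <;> simp_all [Fin.ext_iff] <;> omega

lemma adj_iff {x y : Fin (2 * d + 1) ⊕ Fin (2 * d - 1)} :
    (HGraph d).Adj x y ↔ x ≠ y ∧
      ((∃ i j, (LGraph d).Adj i j ∧ x = Sum.inl i ∧ y = Sum.inl j) ∨
        ∃ i j, (LGraph d).Adj i j ∧ x = embH d i ∧ y = embH d j) := by
  rw [HGraph, fromRel_adj]
  refine and_congr_right fun _ => ⟨?_, Or.inl⟩
  rintro (h | ⟨i, j, hij, rfl, rfl⟩ | ⟨i, j, hij, rfl, rfl⟩)
  exacts [h, Or.inl ⟨j, i, hij.symm, rfl, rfl⟩, Or.inr ⟨j, i, hij.symm, rfl, rfl⟩]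

lemma secondIndex_lt (q : Fin (2 * d - 1)) : secondIndex d q < 2 * d + 1 := by
  have := q.isLt; unfold secondIndex; split_ifs <;> omega

lemma adj_inl_inl {p q : Fin (2 * d + 1)} : (HGraph d).Adj (.inl p) (.inl q) ↔ LAdj d p q := by
  rw [adj_iff]
  constructor
  · rintro ⟨-, ⟨i, j, h, hi, hj⟩ | ⟨i, j, h, hi, hj⟩⟩
    · cases hi; cases hj; exact LGraph_adj.1 h
    · obtain ⟨rfl, -⟩ := embH_eq_inl.1 hi.symm
      obtain ⟨rfl, -⟩ := embH_eq_inl.1 hj.symm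
      exact LGraph_adj.1 h
  · intro h
    exact ⟨fun e => h.1 (by cases e; rfl), Or.inl ⟨p, q, LGraph_adj.2 h, rfl, rfl⟩⟩

lemma adj_inl_inr {p : Fin (2 * d + 1)} {q : Fin (2 * d - 1)} :
    (HGraph d).Adj (.inl p) (.inr q) ↔
      (p.val = d - 1 ∨ p.val = d) ∧ LAdj d p (secondIndex d q) := by
  rw [adj_iff]
  constructor
  · rintro ⟨-, ⟨i, j, h, hi, hj⟩ | ⟨i, j, h, hi, hj⟩⟩
    · cases hj
    · obtain ⟨rfl, hp⟩ := embH_eq_inl.1 hi.symm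
      exact ⟨hp, embH_eq_inr.1 hj.symm ▸ LGraph_adj.1 h⟩
  · rintro ⟨hp, h⟩
    refine ⟨Sum.inl_ne_inr, Or.inr ⟨p, ⟨_, secondIndex_lt q⟩, LGraph_adj.2 h, ?_, ?_⟩⟩
    · exact (embH_eq_inl.2 ⟨rfl, hp⟩).symm
    · exact (embH_eq_inr.2 rfl).symm

lemma adj_inr_inl {p : Fin (2 * d + 1)} {q : Fin (2 * d - 1)} :
    (HGraph d).Adj (.inr q) (.inl p) ↔
      (p.val = d - 1 ∨ p.val = d) ∧ LAdj d p (secondIndex d q) :=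
  adj_comm _ _ _ |>.trans adj_inl_inr

lemma adj_inr_inr {p q : Fin (2 * d - 1)} :
    (HGraph d).Adj (.inr p) (.inr q) ↔ LAdj d (secondIndex d p) (secondIndex d q) := by
  rw [adj_iff]
  constructor
  · rintro ⟨-, ⟨i, j, h, hi, hj⟩ | ⟨i, j, h, hi, hj⟩⟩
    · cases hi
    · rw [← embH_eq_inr.1 hi.symm, ← embH_eq_inr.1 hj.symm]
      exact LGraph_adj.1 h
  · intro h
    refine ⟨fun e => h.1 (by cases e; rfl), Or.inr ⟨⟨_, secondIndex_lt p⟩,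
      ⟨_, secondIndex_lt q⟩, LGraph_adj.2 h, ?_, ?_⟩⟩ <;> exact (embH_eq_inr.2 rfl).symm

/-- The bottom path of `H_d`: `v_(2d), …, v_d` in the first copy, then `v_(d+1), …, v_(2d)` in
the second. -/
def bot (d k : ℕ) : Fin (2 * d + 1) ⊕ Fin (2 * d - 1) :=
  if h : k ≤ d then .inl ⟨2 * d - k, by omega⟩
  else if h₂ : k ≤ 2 * d then .inr ⟨k - 2, by omega⟩
  else .inl ⟨0, by omega⟩

/-- The top path of `H_d`: `v_0, …, v_(d-1)` in the first copy, then `v_(d-2), …, v_0` in the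
second. -/
def top (d t : ℕ) : Fin (2 * d + 1) ⊕ Fin (2 * d - 1) :=
  if h : t + 1 ≤ d then .inl ⟨t, by omega⟩
  else if h₂ : t ≤ 2 * d - 2 ∧ 1 ≤ d then .inr ⟨2 * d - 2 - t, by omega⟩
  else .inl ⟨0, by omega⟩

/-- The rungs `bot d k — top d (rung d k)` are the chords of both copies and, for `k = d`, the
shared edge `v_(d-1) v_d`. -/
def rung (d k : ℕ) : ℕ := k - (if d ≤ k then 1 else 0) - (if d + 1 ≤ k then 1 else 0)

lemma bot_or_top (hd : 1 ≤ d) (v : Fin (2 * d + 1) ⊕ Fin (2 * d - 1)) :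
    (∃ k ≤ 2 * d, bot d k = v) ∨ ∃ t ≤ 2 * d - 2, top d t = v := by
  rcases v with p | q
  · by_cases h : d ≤ p.val
    · refine Or.inl ⟨2 * d - p, by omega, ?_⟩
      rw [bot, dif_pos (by omega)]
      simp only [Sum.inl.injEq, Fin.ext_iff]
      omega
    · exact Or.inr ⟨p, by omega, by rw [top, dif_pos (by omega)]⟩
  · by_cases h : d - 1 ≤ q.val
    · refine Or.inl ⟨q + 2, by omega, ?_⟩
      rw [bot, dif_neg (by omega), dif_pos (by omega)]
      simp
    · refine Or.inr ⟨2 * d - 2 - q, by omega, ?_⟩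
      rw [top, dif_neg (by omega), dif_pos (by omega)]
      simp only [Sum.inr.injEq, Fin.ext_iff]
      omega

def ladder (hd : 1 ≤ d) : (HGraph d).Ladder (2 * d) (2 * d - 2) (rung d) where
  bot := bot d
  top := top d
  bot_injOn k hk k' hk' h := by
    simp only [Set.mem_Iic] at hk hk'
    unfold bot at h
    split_ifs at h <;> simp only [Sum.inl.injEq, Sum.inr.injEq, Fin.ext_iff] at h <;>
      omega
  top_injOn t ht t' ht' h := by
    simp only [Set.mem_Iic] at ht ht'
    unfold top at h
    split_ifs at h <;> simp only [Sum.inl.injEq, Sum.inr.injEq, Fin.ext_iff] at h <;>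
      omega
  bot_ne_top {k t} hk ht h := by
    unfold bot top at h
    split_ifs at h <;> simp only [Sum.inl.injEq, Sum.inr.injEq, Fin.ext_iff] at h <;>
      omega
  bot_or_top := bot_or_top hd
  adj_bot_bot {k k'} hk hk' := by
    unfold bot
    split_ifs <;> simp only [adj_inl_inl, adj_inl_inr, adj_inr_inl, adj_inr_inr, LAdj,
      secondIndex] <;> (try split_ifs) <;> omega
  adj_top_top {t t'} ht ht' := by
    unfold top
    split_ifs <;> simp only [adj_inl_inl, adj_inl_inr, adj_inr_inl, adj_inr_inr, LAdj,
      secondIndex] <;> (try split_ifs) <;> omega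
  adj_bot_top {k t} hk ht := by
    unfold bot top rung
    split_ifs <;> simp only [adj_inl_inl, adj_inl_inr, adj_inr_inl, adj_inr_inr, LAdj,
      secondIndex] <;> (try split_ifs) <;> omega
  monotone_rung a b h := by
    unfold rung; split_ifs <;> omega
  rung_le {k} hk := by
    unfold rung; split_ifs <;> omega

open Finset

lemma odd_cycle_length_iff (hd : 1 ≤ d) (hij : i < j) :
    Odd (j + 1 - i + (rung d j + 1 - rung d i)) ↔ j = d ∨ i = d := by
  simp only [Nat.odd_iff]
  unfold rung
  split_ifs <;> omega

lemma cOdd_eq (hd : 1 ≤ d) : cOdd (HGraph d) = 2 * d := by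
  have hodd : {x ∈ range (2 * d + 1) ×ˢ range (2 * d + 1) |
      x.1 < x.2 ∧ Odd (x.2 + 1 - x.1 + (rung d x.2 + 1 - rung d x.1))} =
      range d ×ˢ {d} ∪ {d} ×ˢ Ioc d (2 * d) := by
    ext ⟨i, j⟩
    simp only [mem_filter, mem_product, mem_range, mem_union, mem_singleton, mem_Ioc]
    constructor
    · rintro ⟨⟨-, hj⟩, hij, h⟩
      have := (odd_cycle_length_iff hd hij).1 h
      omega
    · intro h
      have hij : i < j := by omega
      exact ⟨by omega, hij, (odd_cycle_length_iff hd hij).2 (by omega)⟩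
  rw [cOdd, (ladder hd).ncard_setOf_isCycleSub, hodd, card_union_of_disjoint, card_product,
    card_product, card_range, card_singleton, Nat.card_Ioc]
  · omega
  · simp only [Finset.disjoint_left, mem_product, mem_range, mem_singleton, mem_Ioc]
    omega

lemma cEven_div_cOdd (hd : 1 ≤ d) :
    (cEven (HGraph d) : ℝ) / (cOdd (HGraph d) : ℝ) = (d : ℝ) - 1 / 2 := by
  have hsum : (cOdd (HGraph d) + cEven (HGraph d) : ℝ) = ((2 * d + 1).choose 2 : ℕ) := by
    exact_mod_cast (ladder hd).cOdd_add_cEven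
  rw [Nat.cast_choose_two, cOdd_eq hd] at hsum
  rw [cOdd_eq hd, eq_sub_of_add_eq' hsum]
  push_cast
  field_simp
  ring

end HGraph

theorem ratio_HGraph :
    (∀ d : ℕ, 1 ≤ d →
      (cEven (HGraph d) : ℝ) / (cOdd (HGraph d) : ℝ) = (d : ℝ) - 1 / 2) ∧
    Tendsto (fun d : ℕ => (cEven (HGraph d) : ℝ) / (cOdd (HGraph d) : ℝ)) atTop atTop := by
  refine ⟨fun d hd => HGraph.cEven_div_cOdd hd, ?_⟩
  refine (tendsto_atTop_add_const_right atTop (-(1 / 2)) tendsto_natCast_atTop_atTop).congr' ?_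
  filter_upwards [eventually_ge_atTop 1] with d hd
  rw [HGraph.cEven_div_cOdd hd, sub_eq_add_neg]
end

section
/- Let t ≥ 3 be an integer and let I be a nonempty subset of {0,…,t−1} with |I| = s. Then the graph S(t,I) satisfies c_o(S(t,I)) = 2^{s−1} + s and c_e(S(t,I)) = 2^{s−1}. -/
open SimpleGraph Filter

/-- The graph `S(t, I)`: a `t`-cycle `v_0 … v_(t-1)` together with, for each `i ∈ I`,
an extra vertex `r_i` joined to `v_i` and `v_(i+1)` (a triangle attached along the
edge `v_i v_(i+1)`). -/
def SGraph (t : ℕ) (I : Finset (ZMod t)) : SimpleGraph (ZMod t ⊕ {i : ZMod t // i ∈ I}) :=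
  SimpleGraph.fromRel (fun x y =>
    (∃ i : ZMod t, x = Sum.inl i ∧ y = Sum.inl (i + 1)) ∨
    (∃ r : {i : ZMod t // i ∈ I}, y = Sum.inr r ∧
      (x = Sum.inl r.val ∨ x = Sum.inl (r.val + 1))))

/-!
A cycle of `S(t, I)` either uses the rim edge `v_i v_(i+1)` together with the apex `r_i`, and
then, being 2-regular and connected, it is the triangle `v_i v_(i+1) r_i`; or it contains no such
pair, and then degree counting at the rim vertices shows that it runs all the way around the rim,
detouring through `r_j` exactly for the `j` in some `J ⊆ I`. This gives `s` triangles and one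
cycle of length `t + |J|` for each `J ⊆ I`; for `s ≥ 1` the alternating sum of `(-1)^|J|` over
the `2^s` subsets vanishes, so exactly half of them give each parity of `t + |J|`.
-/

open Finset Sum

theorem ZMod.forall_of_succ {n : ℕ} [NeZero n] {P : ZMod n → Prop} {i : ZMod n} (hi : P i)
    (hsucc : ∀ j, P j → P (j + 1)) (j : ZMod n) : P j := by
  have key : ∀ k : ℕ, P (i + k) := fun k => by
    induction k with
    | zero => simpa using hi
    | succ k ih => simpa [add_assoc] using hsucc _ ih
  simpa using key (j - i).val

theorem ZMod.natCast_ne_zero_of_lt {n k : ℕ} (hk : 0 < k) (hkn : k < n) : (k : ZMod n) ≠ 0 := by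
  rw [Ne, ZMod.natCast_eq_zero_iff]
  exact fun h => (Nat.le_of_dvd hk h).not_gt hkn

theorem ZMod.add_one_ne_self {n : ℕ} (hn : 1 < n) (i : ZMod n) : i + 1 ≠ i := by
  have := ZMod.natCast_ne_zero_of_lt (n := n) one_pos hn
  contrapose! this
  simpa using this

theorem ZMod.add_one_add_one_ne_self {n : ℕ} (hn : 2 < n) (i : ZMod n) : i + 1 + 1 ≠ i := by
  have := ZMod.natCast_ne_zero_of_lt (n := n) two_pos hn
  contrapose! this
  simpa [add_assoc, one_add_one_eq_two] using this

theorem Finset.card_powerset_filter_even_add_and_odd_add {α : Type*} {S : Finset α}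
    (hS : S.Nonempty) (t : ℕ) : #{J ∈ S.powerset | Even (t + #J)} = 2 ^ (#S - 1) ∧
      #{J ∈ S.powerset | Odd (t + #J)} = 2 ^ (#S - 1) := by
  have hdiff : (#{J ∈ S.powerset | Even (t + #J)} : ℤ) - #{J ∈ S.powerset | Odd (t + #J)} = 0 :=
    calc _ = ∑ J ∈ S.powerset, (-1 : ℤ) ^ (t + #J) := by
          simp_rw [neg_one_pow_eq_ite, sum_ite, Nat.not_even_iff_odd]
          simp [sub_eq_add_neg]
      _ = (-1) ^ t * ∑ J ∈ S.powerset, (-1 : ℤ) ^ #J := by simp [pow_add, mul_sum]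
      _ = 0 := by rw [sum_powerset_neg_one_pow_card_of_nonempty hS, mul_zero]
  have hsum : #{J ∈ S.powerset | Even (t + #J)} + #{J ∈ S.powerset | Odd (t + #J)} = 2 ^ #S := by
    simp_rw [← Nat.not_even_iff_odd]
    rw [card_filter_add_card_filter_not, card_powerset]
  have hpow : 2 ^ #S = 2 * 2 ^ (#S - 1) := by
    rw [← pow_succ', Nat.sub_add_cancel hS.card_pos]
  omega

namespace SimpleGraph.Subgraph

variable {V : Type*} {G : SimpleGraph V} {H H' : G.Subgraph}

theorem verts_subset_of_forall_neighborSet_subset (hH : H.coe.Connected) {S : Set V}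
    (hS : S ⊆ H.verts) (hne : S.Nonempty) (hclosed : ∀ v ∈ S, H.neighborSet v ⊆ S) :
    H.verts ⊆ S := by
  obtain ⟨v₀, hv₀⟩ := hne
  intro u hu
  obtain ⟨p⟩ := hH.preconnected ⟨v₀, hS hv₀⟩ ⟨u, hu⟩
  suffices ∀ (a b : H.verts), H.coe.Walk a b → a.1 ∈ S → b.1 ∈ S from this _ _ p hv₀
  intro a b p
  induction p with
  | nil => exact id
  | cons h _ ih => exact fun ha => ih (hclosed _ ha h)

theorem adj_of_neighborSet_subset_pair {v a b : V} (h2 : (H.neighborSet v).ncard = 2)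
    (hsub : H.neighborSet v ⊆ {a, b}) : H.Adj v a ∧ H.Adj v b := by
  have hle : ({a, b} : Set V).ncard ≤ (H.neighborSet v).ncard :=
    h2 ▸ (Set.ncard_insert_le a {b}).trans (by simp)
  have hN := Set.eq_of_subset_of_ncard_le hsub hle (Set.toFinite _)
  have ha : a ∈ H.neighborSet v := hN ▸ Set.mem_insert a {b}
  have hb : b ∈ H.neighborSet v := hN ▸ Set.mem_insert_of_mem a rfl
  exact ⟨ha, hb⟩

theorem IsCycleSub.eq_of_le_s14 (hH : H.IsCycleSub) (hH' : H'.IsCycleSub) (hle : H' ≤ H) :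
    H' = H := by
  have hN : ∀ v ∈ H'.verts, H'.neighborSet v = H.neighborSet v := fun v hv =>
    Set.eq_of_subset_of_ncard_le (neighborSet_subset_of_subgraph hle v)
      (by rw [hH.2.2 v (hle.1 hv), hH'.2.2 v hv])
      (Set.finite_of_ncard_ne_zero (by rw [hH.2.2 v (hle.1 hv)]; norm_num))
  have hverts : H.verts ⊆ H'.verts :=
    verts_subset_of_forall_neighborSet_subset hH.2.1 hle.1 hH'.1
      fun v hv => (hN v hv).symm ▸ fun _ h => h.snd_mem
  refine le_antisymm hle ⟨hverts, fun x y h => ?_⟩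
  have hy : y ∈ H.neighborSet x := h
  rwa [← hN x (hverts h.fst_mem)] at hy

theorem adj_of_mem_triple {a b c x y : V} (hab : H.Adj a b) (hbc : H.Adj b c) (hca : H.Adj c a)
    (hx : x ∈ ({a, b, c} : Set V)) (hy : y ∈ ({a, b, c} : Set V)) (hxy : x ≠ y) : H.Adj x y := by
  rcases hx with rfl | rfl | rfl <;> rcases hy with rfl | rfl | rfl <;>
    first
      | exact absurd rfl hxy
      | assumption
      | exact Adj.symm ‹_›

theorem top_induce_triple_le {a b c : V} (hab : H.Adj a b) (hbc : H.Adj b c) (hca : H.Adj c a) :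
    (⊤ : G.Subgraph).induce {a, b, c} ≤ H := by
  refine ⟨?_, fun x y ⟨hx, hy, hxy⟩ => adj_of_mem_triple hab hbc hca hx hy (hxy : G.Adj x y).ne⟩
  rintro x (rfl | rfl | rfl)
  exacts [hab.fst_mem, hbc.fst_mem, hca.fst_mem]

theorem isCycleSub_top_induce_triple {a b c : V} (hab : G.Adj a b) (hbc : G.Adj b c)
    (hca : G.Adj c a) : ((⊤ : G.Subgraph).induce {a, b, c}).IsCycleSub := by
  set T := (⊤ : G.Subgraph).induce {a, b, c}
  have hadj : ∀ x ∈ T.verts, ∀ y ∈ T.verts, x ≠ y → T.Adj x y := fun x hx y hy hxy =>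
    ⟨hx, hy, adj_of_mem_triple (H := ⊤) (top_adj.2 hab) (top_adj.2 hbc) (top_adj.2 hca) hx hy hxy⟩
  have hN : ∀ v ∈ T.verts, T.neighborSet v = T.verts \ {v} := fun v hv => by
    ext x
    exact ⟨fun (h : T.Adj v x) => ⟨h.snd_mem, h.ne.symm⟩,
      fun ⟨hx, hxv⟩ => hadj v hv x hx (Ne.symm hxv)⟩
  have hcard : T.verts.ncard = 3 :=
    Set.ncard_eq_three.2 ⟨a, b, c, hab.ne, hca.ne.symm, hbc.ne, rfl⟩
  refine ⟨⟨a, Or.inl rfl⟩, ?_, fun v hv => ?_⟩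
  · have : Nonempty T.verts := ⟨⟨a, Or.inl rfl⟩⟩
    refine ⟨fun u v => ?_⟩
    by_cases huv : u = v
    · exact huv ▸ Reachable.refl u
    · exact Adj.reachable (hadj u u.2 v v.2 (Subtype.coe_ne_coe.2 huv))
  · rw [hN v hv, Set.ncard_sdiff_singleton_of_mem hv, hcard]

end SimpleGraph.Subgraph

namespace SGraph

open SimpleGraph.Subgraph

variable {t : ℕ} {I : Finset (ZMod t)}

@[simp] theorem adj_inl_inl {i j : ZMod t} :
    (SGraph t I).Adj (inl i) (inl j) ↔ i ≠ j ∧ (j = i + 1 ∨ i = j + 1) := by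
  simp [SGraph]

@[simp] theorem adj_inl_inr {i : ZMod t} {r : {i // i ∈ I}} :
    (SGraph t I).Adj (inl i) (inr r) ↔ i = r.1 ∨ i = r.1 + 1 := by
  simp [SGraph]

@[simp] theorem adj_inr_inl {i : ZMod t} {r : {i // i ∈ I}} :
    (SGraph t I).Adj (inr r) (inl i) ↔ i = r.1 ∨ i = r.1 + 1 := by
  rw [SimpleGraph.adj_comm, adj_inl_inr]

@[simp] theorem not_adj_inr_inr {r s : {i // i ∈ I}} : ¬ (SGraph t I).Adj (inr r) (inr s) := by
  simp [SGraph]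

def triangle (r : {i // i ∈ I}) : (SGraph t I).Subgraph :=
  (⊤ : (SGraph t I).Subgraph).induce {inl r.1, inl (r.1 + 1), inr r}

def rimCycle (J : Finset (ZMod t)) : (SGraph t I).Subgraph :=
  ((⊤ : (SGraph t I).Subgraph).induce (Set.range inl ∪ inr '' {r | r.1 ∈ J})).deleteEdges
    {e | ∃ j ∈ J, e = s(inl j, inl (j + 1))}

theorem rimCycle_verts (J : Finset (ZMod t)) :
    (rimCycle (I := I) J).verts = Set.range inl ∪ inr '' {r | r.1 ∈ J} :=
  rfl

@[simp] theorem inl_mem_rimCycle_verts {J : Finset (ZMod t)} {i : ZMod t} :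
    inl i ∈ (rimCycle (I := I) J).verts := by
  simp [rimCycle]

@[simp] theorem inr_mem_rimCycle_verts {J : Finset (ZMod t)} {r : {i // i ∈ I}} :
    inr r ∈ (rimCycle (I := I) J).verts ↔ r.1 ∈ J := by
  simp [rimCycle]

@[simp] theorem rimCycle_adj_inl_inl (ht : 3 ≤ t) {J : Finset (ZMod t)} {i j : ZMod t} :
    (rimCycle (I := I) J).Adj (inl i) (inl j) ↔ (j = i + 1 ∧ i ∉ J) ∨ (i = j + 1 ∧ j ∉ J) := by
  have h1 := ZMod.add_one_ne_self (n := t) (by omega)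
  have h2 := ZMod.add_one_add_one_ne_self ht
  simp [rimCycle]
  grind

@[simp] theorem rimCycle_adj_inr_inl {J : Finset (ZMod t)} {i : ZMod t} {r : {i // i ∈ I}} :
    (rimCycle (I := I) J).Adj (inr r) (inl i) ↔ r.1 ∈ J ∧ (i = r.1 ∨ i = r.1 + 1) := by
  simp [rimCycle]

@[simp] theorem rimCycle_adj_inl_inr {J : Finset (ZMod t)} {i : ZMod t} {r : {i // i ∈ I}} :
    (rimCycle (I := I) J).Adj (inl i) (inr r) ↔ r.1 ∈ J ∧ (i = r.1 ∨ i = r.1 + 1) := by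
  simp [rimCycle]

@[simp] theorem not_rimCycle_adj_inr_inr {J : Finset (ZMod t)} {r s : {i // i ∈ I}} :
    ¬ (rimCycle (I := I) J).Adj (inr r) (inr s) := fun h => not_adj_inr_inr h.adj_sub

theorem rimCycle_ncard_neighborSet_inl (ht : 3 ≤ t) {J : Finset (ZMod t)} (hJ : J ⊆ I)
    (i : ZMod t) : ((rimCycle (I := I) J).neighborSet (inl i)).ncard = 2 := by
  have h1 := ZMod.add_one_ne_self (n := t) (by omega)
  have h2 := ZMod.add_one_add_one_ne_self ht
  rw [Set.ncard_eq_two]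
  by_cases hi : i ∈ J <;> by_cases hi' : i - 1 ∈ J
  · refine ⟨inr ⟨i, hJ hi⟩, inr ⟨i - 1, hJ hi'⟩, by have := h1 (i - 1); simp; grind, ?_⟩
    ext (j | s) <;> simp [rimCycle_adj_inl_inl ht, Subtype.ext_iff] <;> grind
  · refine ⟨inr ⟨i, hJ hi⟩, inl (i - 1), by simp, ?_⟩
    ext (j | s) <;> simp [rimCycle_adj_inl_inl ht, Subtype.ext_iff] <;> grind
  · refine ⟨inl (i + 1), inr ⟨i - 1, hJ hi'⟩, by simp, ?_⟩
    ext (j | s) <;> simp [rimCycle_adj_inl_inl ht, Subtype.ext_iff] <;> grind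
  · refine ⟨inl (i + 1), inl (i - 1), by simp; grind, ?_⟩
    ext (j | s) <;> simp [rimCycle_adj_inl_inl ht] <;> grind

theorem rimCycle_ncard_neighborSet_inr (ht : 3 ≤ t) {J : Finset (ZMod t)} {r : {i // i ∈ I}}
    (hr : r.1 ∈ J) : ((rimCycle (I := I) J).neighborSet (inr r)).ncard = 2 := by
  rw [Set.ncard_eq_two]
  refine ⟨inl r.1, inl (r.1 + 1), by simpa using (ZMod.add_one_ne_self (by omega) r.1).symm, ?_⟩
  ext (j | s) <;> simp [rimCycle_adj_inr_inl, hr]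

theorem rimCycle_connected (ht : 3 ≤ t) {J : Finset (ZMod t)} (hJ : J ⊆ I) :
    (rimCycle (I := I) J).coe.Connected := by
  have : NeZero t := ⟨by omega⟩
  have hrim : ∀ i, (rimCycle (I := I) J).coe.Reachable
      ⟨inl 0, inl_mem_rimCycle_verts⟩ ⟨inl i, inl_mem_rimCycle_verts⟩ := by
    refine ZMod.forall_of_succ (Reachable.refl _) fun i hi => hi.trans ?_
    by_cases hiJ : i ∈ J
    · have h₁ : (rimCycle (I := I) J).Adj (inl i) (inr ⟨i, hJ hiJ⟩) := by simp [hiJ]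
      have h₂ : (rimCycle (I := I) J).Adj (inr ⟨i, hJ hiJ⟩) (inl (i + 1)) := by simp [hiJ]
      exact h₁.coe.reachable.trans h₂.coe.reachable
    · have h : (rimCycle (I := I) J).Adj (inl i) (inl (i + 1)) := by
        simp [rimCycle_adj_inl_inl ht, hiJ]
      exact h.coe.reachable
  have : Nonempty (rimCycle (I := I) J).verts := ⟨⟨inl 0, inl_mem_rimCycle_verts⟩⟩
  suffices h : ∀ v, (rimCycle (I := I) J).coe.Reachable ⟨inl 0, inl_mem_rimCycle_verts⟩ v from
    ⟨fun u v => (h u).symm.trans (h v)⟩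
  rintro ⟨i | r, hv⟩
  · exact hrim i
  · have h : (rimCycle (I := I) J).Adj (inl r.1) (inr r) := by simpa using hv
    exact (hrim r.1).trans h.coe.reachable

theorem rimCycle_isCycleSub (ht : 3 ≤ t) {J : Finset (ZMod t)} (hJ : J ⊆ I) :
    (rimCycle (I := I) J).IsCycleSub := by
  refine ⟨⟨inl 0, inl_mem_rimCycle_verts⟩, rimCycle_connected ht hJ, ?_⟩
  rintro (i | r) hv
  · exact rimCycle_ncard_neighborSet_inl ht hJ i
  · exact rimCycle_ncard_neighborSet_inr ht (by simpa using hv)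

theorem rimCycle_verts_ncard (ht : 3 ≤ t) {J : Finset (ZMod t)} (hJ : J ⊆ I) :
    (rimCycle (I := I) J).verts.ncard = t + #J := by
  have : NeZero t := ⟨by omega⟩
  have hval : Subtype.val '' {r : {i // i ∈ I} | r.1 ∈ J} = J := by
    ext i
    simpa using fun hi => hJ hi
  rw [rimCycle_verts, Set.ncard_union_eq (by simp [Set.disjoint_left]),
    Set.ncard_range_of_injective inl_injective, Nat.card_zmod,
    Set.ncard_image_of_injective _ inr_injective,
    ← Set.ncard_image_of_injective _ Subtype.val_injective, hval, Set.ncard_coe_finset]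

theorem triangle_isCycleSub (ht : 3 ≤ t) (r : {i // i ∈ I}) : (triangle r).IsCycleSub :=
  isCycleSub_top_induce_triple (by simpa using (ZMod.add_one_ne_self (by omega) r.1).symm)
    (by simp) (by simp)

theorem triangle_verts_ncard (ht : 3 ≤ t) (r : {i // i ∈ I}) : (triangle r).verts.ncard = 3 :=
  Set.ncard_eq_three.2
    ⟨_, _, _, by simpa using (ZMod.add_one_ne_self (by omega) r.1).symm, by simp, by simp, rfl⟩

variable {H : (SGraph t I).Subgraph}

theorem _root_.SimpleGraph.Subgraph.IsCycleSub.adj_inr (hH : H.IsCycleSub) {r : {i // i ∈ I}}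
    (hr : inr r ∈ H.verts) : H.Adj (inr r) (inl r.1) ∧ H.Adj (inr r) (inl (r.1 + 1)) := by
  refine adj_of_neighborSet_subset_pair (hH.2.2 _ hr) ?_
  rintro (i | s) hx
  · have := (hx : H.Adj _ _).adj_sub
    simp only [adj_inr_inl] at this
    rcases this with rfl | rfl <;> simp
  · exact absurd (hx : H.Adj _ _).adj_sub not_adj_inr_inr

theorem eq_triangle_of_adj (ht : 3 ≤ t) (hH : H.IsCycleSub) {r : {i // i ∈ I}}
    (hr : inr r ∈ H.verts) (h : H.Adj (inl r.1) (inl (r.1 + 1))) : triangle r = H :=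
  hH.eq_of_le_s14 (triangle_isCycleSub ht r)
    (top_induce_triple_le h (hH.adj_inr hr).2.symm (hH.adj_inr hr).1)

-- Otherwise the two neighbours of `v_i` are `v_(i-1)` and `r_(i-1)`, and since `r_(i-1)` is
-- adjacent to `v_(i-1)` as well, the cycle would contain the triangle at `i - 1`.
theorem adj_succ_or_inr_mem (hH : H.IsCycleSub)
    (hfree : ∀ r, inr r ∈ H.verts → ¬ H.Adj (inl r.1) (inl (r.1 + 1)))
    {i : ZMod t} (hi : inl i ∈ H.verts) :
    H.Adj (inl i) (inl (i + 1)) ∨ ∃ r : {i // i ∈ I}, r.1 = i ∧ inr r ∈ H.verts := by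
  by_contra! ⟨hadj, hr⟩
  have hnb : ∀ x, H.Adj (inl i) x →
      x = inl (i - 1) ∨ ∃ s : {i // i ∈ I}, x = inr s ∧ s.1 = i - 1 := by
    rintro (j | s) hx <;> have := hx.adj_sub
    · simp only [adj_inl_inl] at this
      rcases this with ⟨-, rfl | rfl⟩
      · exact absurd hx hadj
      · simp
    · simp only [adj_inl_inr] at this
      rcases this with rfl | rfl
      · exact absurd hx.snd_mem (hr s rfl)
      · simp
  by_cases hI : i - 1 ∈ I
  · have hsub : H.neighborSet (inl i) ⊆ {inl (i - 1), inr ⟨i - 1, hI⟩} := fun x hx => by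
      rcases hnb x hx with rfl | ⟨s, rfl, hs⟩
      · simp
      · simp [← hs]
    obtain ⟨h₁, h₂⟩ := adj_of_neighborSet_subset_pair (hH.2.2 _ hi) hsub
    exact hfree _ h₂.snd_mem (by simpa using h₁.symm)
  · have hsub : H.neighborSet (inl i) ⊆ {inl (i - 1)} := fun x hx => by
      rcases hnb x hx with rfl | ⟨s, rfl, hs⟩
      · simp
      · exact absurd (hs ▸ s.2) hI
    have := Set.ncard_le_ncard hsub
    rw [hH.2.2 _ hi, Set.ncard_singleton] at this
    omega

theorem inl_mem_verts_of_triangleFree (ht : 3 ≤ t) (hH : H.IsCycleSub)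
    (hfree : ∀ r, inr r ∈ H.verts → ¬ H.Adj (inl r.1) (inl (r.1 + 1))) (i : ZMod t) :
    inl i ∈ H.verts := by
  have : NeZero t := ⟨by omega⟩
  obtain ⟨k, hk⟩ : ∃ k, inl k ∈ H.verts := by
    obtain ⟨(k | r), hv⟩ := hH.1
    exacts [⟨k, hv⟩, ⟨r.1, (hH.adj_inr hv).1.snd_mem⟩]
  refine ZMod.forall_of_succ (P := fun j => inl j ∈ H.verts) hk (fun j hj => ?_) i
  rcases adj_succ_or_inr_mem hH hfree hj with h | ⟨r, rfl, hr⟩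
  exacts [h.snd_mem, (hH.adj_inr hr).2.snd_mem]

theorem exists_eq_rimCycle_of_triangleFree (ht : 3 ≤ t) (hH : H.IsCycleSub)
    (hfree : ∀ r, inr r ∈ H.verts → ¬ H.Adj (inl r.1) (inl (r.1 + 1))) :
    ∃ J ⊆ I, rimCycle J = H := by
  classical
  set J := {i ∈ I | ∃ r : {i // i ∈ I}, r.1 = i ∧ inr r ∈ H.verts}
  have hJ : ∀ r : {i // i ∈ I}, r.1 ∈ J ↔ inr r ∈ H.verts := fun r => by
    simp only [J, mem_filter, r.2, true_and]
    exact ⟨fun ⟨s, hs, h⟩ => Subtype.ext hs ▸ h, fun h => ⟨r, rfl, h⟩⟩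
  have hsucc : ∀ i ∉ J, H.Adj (inl i) (inl (i + 1)) := fun i hi =>
    (adj_succ_or_inr_mem hH hfree (inl_mem_verts_of_triangleFree ht hH hfree i)).resolve_right
      fun ⟨r, hri, hr⟩ => hi (hri ▸ (hJ r).2 hr)
  refine ⟨J, filter_subset _ _, hH.eq_of_le_s14 (rimCycle_isCycleSub ht (filter_subset _ _)) ⟨?_, ?_⟩⟩
  · rintro (i | r) hv
    · exact inl_mem_verts_of_triangleFree ht hH hfree i
    · exact (hJ r).1 (by simpa using hv)
  · rintro (i | r) (j | s) h
    · rcases (rimCycle_adj_inl_inl ht).1 h with ⟨rfl, hi⟩ | ⟨rfl, hj⟩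
      exacts [hsucc i hi, (hsucc j hj).symm]
    · obtain ⟨hs, rfl | rfl⟩ := rimCycle_adj_inl_inr.1 h
      exacts [(hH.adj_inr ((hJ s).1 hs)).1.symm, (hH.adj_inr ((hJ s).1 hs)).2.symm]
    · obtain ⟨hr, rfl | rfl⟩ := rimCycle_adj_inr_inl.1 h
      exacts [(hH.adj_inr ((hJ r).1 hr)).1, (hH.adj_inr ((hJ r).1 hr)).2]
    · exact absurd h not_rimCycle_adj_inr_inr

theorem eq_triangle_or_eq_rimCycle (ht : 3 ≤ t) (hH : H.IsCycleSub) :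
    (∃ r, triangle r = H) ∨ ∃ J ⊆ I, rimCycle J = H := by
  by_cases htri : ∃ r, inr r ∈ H.verts ∧ H.Adj (inl r.1) (inl (r.1 + 1))
  · obtain ⟨r, hr, h⟩ := htri
    exact Or.inl ⟨r, eq_triangle_of_adj ht hH hr h⟩
  · exact Or.inr (exists_eq_rimCycle_of_triangleFree ht hH fun r hr h => htri ⟨r, hr, h⟩)

theorem triangle_injective : Function.Injective (triangle (t := t) (I := I)) := fun r s h => by
  have hr : inr r ∈ (triangle s).verts :=
    h ▸ Set.mem_insert_of_mem _ (Set.mem_insert_of_mem _ rfl)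
  simpa [triangle] using hr

theorem rimCycle_injOn : Set.InjOn (rimCycle (I := I)) {J | J ⊆ I} := fun J hJ J' hJ' h => by
  ext i
  constructor
  · intro hi
    have hr := (inr_mem_rimCycle_verts (r := ⟨i, hJ hi⟩) (J := J)).2 hi
    rwa [h, inr_mem_rimCycle_verts] at hr
  · intro hi
    have hr := (inr_mem_rimCycle_verts (r := ⟨i, hJ' hi⟩) (J := J')).2 hi
    rwa [← h, inr_mem_rimCycle_verts] at hr

theorem triangle_ne_rimCycle (ht : 3 ≤ t) (r : {i // i ∈ I}) (J : Finset (ZMod t)) :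
    triangle r ≠ rimCycle J := fun h => by
  have hmem : inl (r.1 + 1 + 1) ∈ (triangle r).verts := h ▸ inl_mem_rimCycle_verts
  simp only [triangle, induce_verts, Set.mem_insert_iff, Set.mem_singleton_iff, inl.injEq,
    reduceCtorEq, or_false] at hmem
  rcases hmem with h | h
  · exact ZMod.add_one_add_one_ne_self ht _ h
  · exact ZMod.add_one_ne_self (by omega) _ h

theorem ncard_setOf_isCycleSub_and (ht : 3 ≤ t) (p : ℕ → Prop) [DecidablePred p] :
    {H : (SGraph t I).Subgraph | H.IsCycleSub ∧ p H.verts.ncard}.ncard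
      = {_r : {i // i ∈ I} | p 3}.ncard + #{J ∈ I.powerset | p (t + #J)} := by
  have hset : {H : (SGraph t I).Subgraph | H.IsCycleSub ∧ p H.verts.ncard}
      = triangle '' {_r | p 3} ∪ rimCycle '' ↑{J ∈ I.powerset | p (t + #J)} := by
    ext H
    simp only [Set.mem_ofPred_eq, Set.mem_union, Set.mem_image, coe_filter, mem_powerset]
    constructor
    · rintro ⟨hH, hp⟩
      rcases eq_triangle_or_eq_rimCycle ht hH with ⟨r, rfl⟩ | ⟨J, hJ, rfl⟩
      · exact Or.inl ⟨r, by rwa [triangle_verts_ncard ht] at hp, rfl⟩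
      · exact Or.inr ⟨J, ⟨hJ, by rwa [rimCycle_verts_ncard ht hJ] at hp⟩, rfl⟩
    · rintro (⟨r, hp, rfl⟩ | ⟨J, ⟨hJ, hp⟩, rfl⟩)
      · exact ⟨triangle_isCycleSub ht r, by rwa [triangle_verts_ncard ht]⟩
      · exact ⟨rimCycle_isCycleSub ht hJ, by rwa [rimCycle_verts_ncard ht hJ]⟩
  rw [hset, Set.ncard_union_eq, Set.ncard_image_of_injective _ triangle_injective,
    (rimCycle_injOn.mono fun J hJ => mem_powerset.1 (mem_filter.1 hJ).1).ncard_image,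
    Set.ncard_coe_finset]
  exact Set.disjoint_left.2 fun _ ⟨r, _, hr⟩ ⟨J, _, hJ⟩ =>
    triangle_ne_rimCycle ht r J (hr.trans hJ.symm)

end SGraph

theorem cOdd_cEven_SGraph (t : ℕ) (ht : 3 ≤ t) (I : Finset (ZMod t)) (hI : I.Nonempty) :
    cOdd (SGraph t I) = 2 ^ (I.card - 1) + I.card ∧ cEven (SGraph t I) = 2 ^ (I.card - 1) := by
  obtain ⟨heven, hodd⟩ := Finset.card_powerset_filter_even_add_and_odd_add hI t
  constructor
  · rw [cOdd, SGraph.ncard_setOf_isCycleSub_and ht Odd, hodd, add_comm]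
    simp [Nat.odd_iff]
  · rw [cEven, SGraph.ncard_setOf_isCycleSub_and ht Even, heven]
    simp [Nat.even_iff]
end
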